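/- Let A ∈ ℝ^{m×n} have rank m, b = A x* with x* ≥ 0, and let y* be a KKT point of min −b^T y s.t. A^T y ≤ c with multiplier x* (so A x* = b, A^T y* ≤ c, x* ≥ 0, (x*)^T(c − A^T y*) = 0). Then for any μ, ρ > 0, the gradient of the SBAL function at (y*, x*) satisfies ‖A z* − ρ b‖ = ‖A(z* − ρx*)‖ ≤ sqrt(ρμ) Σ_i ‖A_i‖, where z*_i = z(ρ x*_i − c_i + A_i^T y*) with z(t) = (sqrt(t² + 4ρμ) + t)/2. -/

import Mathlib

open Matrix

noncomputable def sbal_z (μ ρ t : ℝ) : ℝ := (Real.sqrt (t ^ 2 + 4 * ρ * μ) + t) / 2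

lemma sbal_key (a t : ℝ) (ha : 0 ≤ a) :
    |(Real.sqrt (t ^ 2 + 4 * a) + t) / 2 - max t 0| ≤ Real.sqrt a := by
  have h1 : |t| ≤ Real.sqrt (t ^ 2 + 4 * a) := by
    rw [← Real.sqrt_sq_eq_abs]
    exact Real.sqrt_le_sqrt (by linarith)
  have hs : Real.sqrt a ^ 2 = a := Real.sq_sqrt ha
  have h2 : Real.sqrt (t ^ 2 + 4 * a) ≤ |t| + 2 * Real.sqrt a := by
    have hle : t ^ 2 + 4 * a ≤ (|t| + 2 * Real.sqrt a) ^ 2 := by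
      nlinarith [abs_nonneg t, Real.sqrt_nonneg a, sq_abs t]
    calc Real.sqrt (t ^ 2 + 4 * a) ≤ Real.sqrt ((|t| + 2 * Real.sqrt a) ^ 2) :=
          Real.sqrt_le_sqrt hle
      _ = |t| + 2 * Real.sqrt a := by
          rw [Real.sqrt_sq (by positivity)]
  have hm : max t 0 = (t + |t|) / 2 := by
    rcases le_total t 0 with h | h
    · rw [max_eq_right h, abs_of_nonpos h]; ring
    · rw [max_eq_left h, abs_of_nonneg h]; ring
  rw [hm, abs_le]
  constructor <;> [linarith [Real.sqrt_nonneg a]; linarith]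

theorem stmt12 {m n : ℕ} (A : Matrix (Fin m) (Fin n) ℝ) (b : Fin m → ℝ) (c : Fin n → ℝ)
    (hrank : A.rank = m)
    (xstar : Fin n → ℝ) (ystar : Fin m → ℝ)
    (hAx : A *ᵥ xstar = b)
    (hdual : ∀ j, (Aᵀ *ᵥ ystar) j ≤ c j)
    (hxpos : ∀ j, 0 ≤ xstar j)
    (hcomp : ∀ j, xstar j * (c j - (Aᵀ *ᵥ ystar) j) = 0)
    (μ ρ : ℝ) (hμ : 0 < μ) (hρ : 0 < ρ) :
    Real.sqrt (∑ i, (A *ᵥ (fun j =>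
        sbal_z μ ρ (ρ * xstar j - c j + (Aᵀ *ᵥ ystar) j) - ρ * xstar j)) i ^ 2)
      ≤ Real.sqrt (ρ * μ) * ∑ j, Real.sqrt (∑ i, A i j ^ 2) := by
  set d : Fin n → ℝ := fun j =>
    sbal_z μ ρ (ρ * xstar j - c j + (Aᵀ *ᵥ ystar) j) - ρ * xstar j with hd
  have hdbound : ∀ j, |d j| ≤ Real.sqrt (ρ * μ) := by
    intro j
    set t : ℝ := ρ * xstar j - c j + (Aᵀ *ᵥ ystar) j with htdef
    have hmax : ρ * xstar j = max t 0 := by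
      rcases mul_eq_zero.mp (hcomp j) with hx | hsz
      · have ht0 : t ≤ 0 := by
          have := hdual j; rw [htdef, hx]; linarith
        rw [hx, max_eq_right ht0]; ring
      · have ht : t = ρ * xstar j := by rw [htdef]; linarith
        have : 0 ≤ t := by rw [ht]; exact mul_nonneg hρ.le (hxpos j)
        rw [max_eq_left this, ht]
    have hdj : d j = (Real.sqrt (t ^ 2 + 4 * (ρ * μ)) + t) / 2 - max t 0 := by
      show sbal_z μ ρ (ρ * xstar j - c j + (Aᵀ *ᵥ ystar) j) - ρ * xstar j = _
      rw [← htdef, hmax]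
      simp only [sbal_z, mul_assoc]
    rw [hdj]
    exact sbal_key (ρ * μ) t (by positivity)
  let v : Fin n → EuclideanSpace ℝ (Fin m) := fun j => WithLp.toLp 2 (fun i => d j * A i j)
  have hsum : ∀ i, (A *ᵥ d) i = (∑ j, v j) i := by
    intro i
    have happ : (∑ j, v j) i = ∑ j, v j i := by
      rw [WithLp.ofLp_sum, Finset.sum_apply]
    rw [happ]
    simp only [Matrix.mulVec, dotProduct]
    exact Finset.sum_congr rfl fun j _ => mul_comm (A i j) (d j)
  have h1 : Real.sqrt (∑ i, (A *ᵥ d) i ^ 2) = ‖∑ j, v j‖ := by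
    rw [EuclideanSpace.norm_eq]
    congr 1
    refine Finset.sum_congr rfl fun i _ => ?_
    rw [hsum i, Real.norm_eq_abs, sq_abs]
  calc Real.sqrt (∑ i, (A *ᵥ d) i ^ 2) = ‖∑ j, v j‖ := h1
    _ ≤ ∑ j, ‖v j‖ := norm_sum_le _ _
    _ ≤ ∑ j, Real.sqrt (ρ * μ) * Real.sqrt (∑ i, A i j ^ 2) := by
        refine Finset.sum_le_sum fun j _ => ?_
        have hv : ‖v j‖ = |d j| * Real.sqrt (∑ i, A i j ^ 2) := by
          rw [EuclideanSpace.norm_eq]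
          have : ∀ i : Fin m, ‖v j i‖ ^ 2 = d j ^ 2 * A i j ^ 2 := by
            intro i; rw [Real.norm_eq_abs, sq_abs]; show (d j * A i j) ^ 2 = _; ring
          rw [Finset.sum_congr rfl fun i _ => this i, ← Finset.mul_sum,
            Real.sqrt_mul (sq_nonneg _), Real.sqrt_sq_eq_abs]
        rw [hv]
        exact mul_le_mul_of_nonneg_right (hdbound j) (Real.sqrt_nonneg _)
    _ = Real.sqrt (ρ * μ) * ∑ j, Real.sqrt (∑ i, A i j ^ 2) := by
        rw [Finset.mul_sum]
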